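/- arXiv:2512.05372 — 2 statements merged into one kernel-verified Lean document; each statement's English description precedes it below -/
import Mathlib

section
/- Let A, ρ, ρ', t_i, t_s, t_o, t_o', b, b' be positive reals and λ > 1. Assume the round-time model t_i = ρ·A/b + t_o and t_s = ρ'·A/b' + t_o', and that upload time dominates in the sense t_i ≥ λ·t_o and t_s ≥ λ·t_o'. Then the target density ρ' is sandwiched as ((λ−1)/λ)·(b'/b)·(t_s/t_i)·ρ ≤ ρ' ≤ (λ/(λ−1))·(b'/b)·(t_s/t_i)·ρ. -/
/-- **Valid domain of the time difference as approximate density gradient.**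
With the round-time model `t = ρ·A/b + t_o` (upload time plus other
components), if upload time dominates (`t ≥ λ·t_o` with `λ > 1`) for both the
current client configuration `(ρ, b, t_o, t_i)` and the target configuration
`(ρ', b', t_o', t_s)`, then the target density `ρ'` is sandwiched as
`((λ−1)/λ)·(b'/b)·(t_s/t_i)·ρ ≤ ρ' ≤ (λ/(λ−1))·(b'/b)·(t_s/t_i)·ρ`. -/
theorem target_density_sandwich
    (A ρ ρ' ti ts tOther tOther' b b' lam : ℝ)
    (hA : 0 < A) (hρ : 0 < ρ) (hρ' : 0 < ρ')
    (hti : 0 < ti) (hts : 0 < ts)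
    (htO : 0 < tOther) (htO' : 0 < tOther')
    (hb : 0 < b) (hb' : 0 < b')
    (hlam : 1 < lam)
    (hmodel_i : ti = ρ * A / b + tOther)
    (hmodel_s : ts = ρ' * A / b' + tOther')
    (hdom_i : ti ≥ lam * tOther)
    (hdom_s : ts ≥ lam * tOther') :
    ((lam - 1) / lam) * (b' / b) * (ts / ti) * ρ ≤ ρ' ∧
      ρ' ≤ (lam / (lam - 1)) * (b' / b) * (ts / ti) * ρ := by
  have hlam0 : (0:ℝ) < lam := by linarith
  have hlam1 : (0:ℝ) < lam - 1 := by linarith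
  have e1 : ρ * A = (ti - tOther) * b := by
    have h : ρ * A / b = ti - tOther := by linarith
    field_simp at h; linarith
  have e2 : ρ' * A = (ts - tOther') * b' := by
    have h : ρ' * A / b' = ts - tOther' := by linarith
    field_simp at h; linarith
  constructor
  · have hrw : ((lam - 1) / lam) * (b' / b) * (ts / ti) * ρ
        = ((lam - 1) * b' * ts * ρ) / (lam * b * ti) := by
      field_simp
    rw [hrw, div_le_iff₀ (by positivity : (0:ℝ) < lam * b * ti)]
    have k : (lam - 1) * ts * (ti - tOther) * (b * b')
        ≤ lam * ti * (ts - tOther') * (b * b') := by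
      have : (lam - 1) * ts * (ti - tOther) ≤ lam * ti * (ts - tOther') := by
        nlinarith [mul_pos hts htO]
      exact mul_le_mul_of_nonneg_right this (by positivity)
    have eL : (lam - 1) * b' * ts * ρ * A
        = (lam - 1) * ts * (ti - tOther) * (b * b') := by
      linear_combination ((lam - 1) * b' * ts) * e1
    have eR : ρ' * (lam * b * ti) * A
        = lam * ti * (ts - tOther') * (b * b') := by
      linear_combination (lam * b * ti) * e2
    have h3 : (lam - 1) * b' * ts * ρ * A ≤ ρ' * (lam * b * ti) * A := by linarith
    exact le_of_mul_le_mul_right h3 hA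
  · have hrw : (lam / (lam - 1)) * (b' / b) * (ts / ti) * ρ
        = (lam * b' * ts * ρ) / ((lam - 1) * b * ti) := by
      field_simp
    rw [hrw, le_div_iff₀ (by positivity : (0:ℝ) < (lam - 1) * b * ti)]
    have k : (lam - 1) * ti * (ts - tOther') * (b * b')
        ≤ lam * ts * (ti - tOther) * (b * b') := by
      have : (lam - 1) * ti * (ts - tOther') ≤ lam * ts * (ti - tOther) := by
        nlinarith [mul_pos hti htO']
      exact mul_le_mul_of_nonneg_right this (by positivity)
    have eL : ρ' * ((lam - 1) * b * ti) * A
        = (lam - 1) * ti * (ts - tOther') * (b * b') := by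
      linear_combination ((lam - 1) * b * ti) * e2
    have eR : lam * b' * ts * ρ * A
        = lam * ts * (ti - tOther) * (b * b') := by
      linear_combination (lam * b' * ts) * e1
    have h3 : ρ' * ((lam - 1) * b * ti) * A ≤ lam * b' * ts * ρ * A := by linarith
    exact le_of_mul_le_mul_right h3 hA
end

section
/- Under Assumption 4 and the MHFL setup with coverage Γ_k^(n) ≥ 1 at every coordinate, the mask-aware aggregated non-IID gradient bias satisfies ∑_{n=1}^N E‖ (1/Γ_k^(n))·∑_{i∈C_k^(n)} ( ∇F_i^(n)(W_k) − ∇F^(n)(W_k) ) ‖² ≤ ∑_{g=1}^G (|𝒞_g|/Γ*_{g,k}) · f₃(p_{g,k})²·ζ². -/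
/-!
Apply Cauchy–Schwarz at each coordinate `n` to the average over the `Γ n` clients covering it,
then exchange the sums over coordinates and clients. Every coordinate kept by a client's group mask
is covered by at least `Γ*` clients, so each client's contribution is at most its masked bias
divided by `Γ*`, which Assumption 4 bounds; grouping the clients gives the factor `|𝒞_g|`.
-/

open MeasureTheory Finset

noncomputable section

/-- Coordinatewise (Hadamard) product `x ⊙ y` on `ℝ^N`. -/
def had {N : ℕ} (x y : EuclideanSpace ℝ (Fin N)) : EuclideanSpace ℝ (Fin N) :=
  WithLp.toLp 2 (fun n => x n * y n)

theorem sq_one_div_card_mul_sum_le {ι : Type*} (s : Finset ι) (f : ι → ℝ) :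
    (1 / (#s : ℝ) * ∑ i ∈ s, f i) ^ 2 ≤ 1 / (#s : ℝ) * ∑ i ∈ s, f i ^ 2 := by
  rcases eq_or_ne (#s : ℝ) 0 with hs | hs
  · simp [hs]
  calc (1 / (#s : ℝ) * ∑ i ∈ s, f i) ^ 2
      = (1 / (#s : ℝ)) ^ 2 * (∑ i ∈ s, f i) ^ 2 := mul_pow _ _ _
    _ ≤ (1 / (#s : ℝ)) ^ 2 * (#s * ∑ i ∈ s, f i ^ 2) := by
        gcongr; exact sq_sum_le_card_mul_sum_sq
    _ = 1 / (#s : ℝ) * ∑ i ∈ s, f i ^ 2 := by field_simp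

theorem sum_div_le_sum_div_of_le {κ : Type*} (t : Finset κ) {x a : κ → ℝ} {b : ℝ}
    (hx : ∀ n ∈ t, 0 ≤ x n) (hb : 0 < b) (hba : ∀ n ∈ t, b ≤ a n) :
    ∑ n ∈ t, x n / a n ≤ (∑ n ∈ t, x n) / b := by
  rw [sum_div]
  exact sum_le_sum fun n hn => div_le_div_of_nonneg_left (hx n hn) hb (hba n hn)

theorem sum_sq_le_norm_had_sq {N : ℕ} (v m : EuclideanSpace ℝ (Fin N)) :
    ∑ n with m n = 1, v n ^ 2 ≤ ‖had v m‖ ^ 2 := by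
  rw [EuclideanSpace.norm_sq_eq, sum_filter]
  gcongr with n
  split_ifs with h
  · simp [had, h]
  · positivity

theorem sum_comp_eq_sum_card_fiber_mul {ι κ : Type*} [Fintype ι] [Fintype κ] [DecidableEq κ]
    (g : ι → κ) (c : κ → ℝ) :
    ∑ i, c (g i) = ∑ j, (#{i | g i = j} : ℝ) * c j := by
  rw [← sum_fiberwise univ g]
  refine sum_congr rfl fun j _ => ?_
  rw [sum_congr rfl fun i hi => congrArg c (mem_filter.1 hi).2, sum_const, nsmul_eq_mul]

theorem group_aware_gradient_bias_bound_general
    (N C G : ℕ)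
    (Ω : Type*) [MeasurableSpace Ω] (μ : Measure Ω) [IsProbabilityMeasure μ]
    (ζ : ℝ)
    (f₃ : ℝ → ℝ)
    -- masks and groups
    (grp : Fin C → Fin G)
    (mg : Fin G → EuclideanSpace ℝ (Fin N))
    (m : Fin C → EuclideanSpace ℝ (Fin N))
    (hm : ∀ i, m i = mg (grp i))
    (p : Fin G → ℝ)
    (Ck : Fin N → Finset (Fin C))
    (hCk : ∀ n, Ck n = univ.filter fun i => m i n = 1)
    (Γ : Fin N → ℕ) (hΓ : ∀ n, Γ n = (Ck n).card) (hΓ1 : ∀ n, 1 ≤ Γ n)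
    (Γstar : Fin G → ℕ)
    (hΓstar : ∀ g, IsLeast {x : ℕ | ∃ n, mg g n = 1 ∧ Γ n = x} (Γstar g))
    -- differentiable global and local objectives with their gradients
    (gradFg : EuclideanSpace ℝ (Fin N) → EuclideanSpace ℝ (Fin N))
    (gradF : Fin C → EuclideanSpace ℝ (Fin N) → EuclideanSpace ℝ (Fin N))
    -- global model at round k
    (Wk : EuclideanSpace ℝ (Fin N))
    -- Assumption 4 (bounded masked non-IID bias)
    (hA4 : ∀ i, ∫ ω, ‖had (gradF i Wk - gradFg Wk) (mg (grp i))‖ ^ 2 ∂μ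
      ≤ (f₃ (p (grp i))) ^ 2 * ζ ^ 2) :
    ∑ n : Fin N, ∫ ω,
        ((1 / (Γ n : ℝ)) * ∑ i ∈ Ck n, (gradF i Wk n - gradFg Wk n)) ^ 2 ∂μ
      ≤ ∑ g : Fin G, (((univ.filter fun i => grp i = g).card : ℝ) / (Γstar g : ℝ)) *
          (f₃ (p g)) ^ 2 * ζ ^ 2 := by
  set d : Fin C → Fin N → ℝ := fun i n => gradF i Wk n - gradFg Wk n
  have hΓstar_pos : ∀ g, (0 : ℝ) < Γstar g := fun g => by
    obtain ⟨⟨n, -, hn⟩, -⟩ := hΓstar g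
    rw [← hn]
    exact_mod_cast hΓ1 n
  have hΓstar_le : ∀ i n, mg (grp i) n = 1 → (Γstar (grp i) : ℝ) ≤ Γ n := fun i n h => by
    exact_mod_cast (hΓstar (grp i)).2 ⟨n, h, rfl⟩
  simp only [integral_const, probReal_univ, one_smul] at hA4 ⊢
  have hbias : ∀ i, ∑ n with mg (grp i) n = 1, d i n ^ 2 ≤ f₃ (p (grp i)) ^ 2 * ζ ^ 2 :=
    fun i => le_trans (by simpa only [PiLp.sub_apply] using
      sum_sq_le_norm_had_sq (gradF i Wk - gradFg Wk) (mg (grp i))) (hA4 i)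
  calc ∑ n, (1 / (Γ n : ℝ) * ∑ i ∈ Ck n, d i n) ^ 2
      ≤ ∑ n, 1 / (Γ n : ℝ) * ∑ i ∈ Ck n, d i n ^ 2 :=
        sum_le_sum fun n _ => by rw [hΓ]; exact sq_one_div_card_mul_sum_le _ _
    _ = ∑ i, ∑ n with mg (grp i) n = 1, d i n ^ 2 / Γ n := by
        simp only [hCk, hm, mul_sum, sum_filter]
        rw [sum_comm]
        simp only [one_div_mul_eq_div, ite_div, zero_div]
    _ ≤ ∑ i, (∑ n with mg (grp i) n = 1, d i n ^ 2) / Γstar (grp i) :=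
        sum_le_sum fun i _ => sum_div_le_sum_div_of_le _ (fun _ _ => sq_nonneg _)
          (hΓstar_pos _) fun n hn => hΓstar_le i n (mem_filter.1 hn).2
    _ ≤ ∑ i, f₃ (p (grp i)) ^ 2 * ζ ^ 2 / Γstar (grp i) := by gcongr with i; exact hbias i
    _ = _ := by
        rw [sum_comp_eq_sum_card_fiber_mul grp fun g => f₃ (p g) ^ 2 * ζ ^ 2 / Γstar g]
        congr! 1 with g
        ring

/-- **Lemma 5 (group-aware gradient bias bound under parameter-wise
aggregation).**  In the MHFL setup (binary masks `m i = mg (grp i)`, coverage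
sets `Ck n` with `Γ n ≥ 1`, group coverage factor `Γ* g`), under Assumption 4
(bounded masked non-IID bias), the mask-aware aggregated non-IID gradient bias
satisfies
`∑_n E‖(1/Γ^(n))·∑_{i∈C^(n)} (∇F_i^(n)(W_k) − ∇F^(n)(W_k))‖²
  ≤ ∑_g (|𝒞_g|/Γ*_g)·f₃(p_g)²·ζ²`. -/
theorem group_aware_gradient_bias_bound
    (N C G : ℕ) (hN : 0 < N) (hC : 0 < C) (hG : 0 < G)
    (Ω : Type*) [MeasurableSpace Ω] (μ : Measure Ω) [IsProbabilityMeasure μ]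
    (ζ : ℝ) (hζ : 0 ≤ ζ)
    (f₃ : ℝ → ℝ) (hf₃mono : Monotone f₃)
    (hf₃range : ∀ x ∈ Set.Ioc (0:ℝ) 1, f₃ x ∈ Set.Icc (0:ℝ) 1)
    -- masks and groups
    (grp : Fin C → Fin G)
    (mg : Fin G → EuclideanSpace ℝ (Fin N))
    (hmg01 : ∀ g n, mg g n = 0 ∨ mg g n = 1)
    (m : Fin C → EuclideanSpace ℝ (Fin N))
    (hm : ∀ i, m i = mg (grp i))
    (p : Fin G → ℝ)
    (hp : ∀ g, p g = ((univ.filter fun n => mg g n = 1).card : ℝ) / (N : ℝ))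
    (Ck : Fin N → Finset (Fin C))
    (hCk : ∀ n, Ck n = univ.filter fun i => m i n = 1)
    (Γ : Fin N → ℕ) (hΓ : ∀ n, Γ n = (Ck n).card) (hΓ1 : ∀ n, 1 ≤ Γ n)
    (Γstar : Fin G → ℕ)
    (hΓstar : ∀ g, IsLeast {x : ℕ | ∃ n, mg g n = 1 ∧ Γ n = x} (Γstar g))
    -- differentiable global and local objectives with their gradients
    (F : EuclideanSpace ℝ (Fin N) → ℝ)
    (Fi : Fin C → EuclideanSpace ℝ (Fin N) → ℝ)
    (gradFg : EuclideanSpace ℝ (Fin N) → EuclideanSpace ℝ (Fin N))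
    (gradF : Fin C → EuclideanSpace ℝ (Fin N) → EuclideanSpace ℝ (Fin N))
    (hF : ∀ x, HasGradientAt F (gradFg x) x)
    (hFi : ∀ i x, HasGradientAt (Fi i) (gradF i x) x)
    -- global model at round k
    (Wk : EuclideanSpace ℝ (Fin N))
    -- Assumption 4 (bounded masked non-IID bias)
    (hA4 : ∀ i, ∫ ω, ‖had (gradF i Wk - gradFg Wk) (mg (grp i))‖ ^ 2 ∂μ
      ≤ (f₃ (p (grp i))) ^ 2 * ζ ^ 2) :
    ∑ n : Fin N, ∫ ω,
        ((1 / (Γ n : ℝ)) * ∑ i ∈ Ck n, (gradF i Wk n - gradFg Wk n)) ^ 2 ∂μ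
      ≤ ∑ g : Fin G, (((univ.filter fun i => grp i = g).card : ℝ) / (Γstar g : ℝ)) *
          (f₃ (p g)) ^ 2 * ζ ^ 2 :=
  group_aware_gradient_bias_bound_general N C G Ω μ ζ f₃ grp mg m hm p Ck hCk Γ hΓ hΓ1 Γstar hΓstar
    gradFg gradF Wk hA4
end
end
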